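/- arXiv:1202.6612 — 2 statements merged into one kernel-verified Lean document; each statement's English description precedes it below -/
import Mathlib

section
/- If K is a totally real number field of degree n ≥ 3 over Q, then the absolute value of the discriminant of K is greater than 20. Consequently, Q(√5), with discriminant 5, has the smallest absolute discriminant among totally real number fields other than Q. -/
open NumberField NumberField.InfinitePlace Module
open scoped Classical

lemma cayley2 {R : Type*} [CommRing R] (M : Matrix (Fin 2) (Fin 2) R) :
    M * M - M.trace • M + M.det • 1 = 0 := by
  ext i j
  fin_cases i <;> fin_cases j <;>
    simp [Matrix.mul_apply, Matrix.trace, Matrix.det_fin_two, Fin.sum_univ_two,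
      Matrix.one_apply] <;> ring

lemma key {K : Type} [Field K] [NumberField K] (h2 : finrank ℚ K = 2) (x : K) :
    x ^ 2 = algebraMap ℚ K (Algebra.trace ℚ K x) * x - algebraMap ℚ K (Algebra.norm ℚ x) := by
  let b : Basis (Fin 2) ℚ K := (Module.finBasis ℚ K).reindex (finCongr h2)
  apply Algebra.leftMulMatrix_injective b
  have hch := cayley2 (Algebra.leftMulMatrix b x)
  rw [Algebra.trace_eq_matrix_trace b, Algebra.norm_eq_matrix_det b]
  rw [map_sub, map_mul, pow_two, map_mul]
  have h1 : Algebra.leftMulMatrix b (algebraMap ℚ K (Algebra.leftMulMatrix b x).trace)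
      = (Algebra.leftMulMatrix b x).trace • 1 := by
    rw [AlgHom.commutes, Algebra.algebraMap_eq_smul_one]
  have h2 : Algebra.leftMulMatrix b (algebraMap ℚ K (Algebra.leftMulMatrix b x).det)
      = (Algebra.leftMulMatrix b x).det • 1 := by
    rw [AlgHom.commutes, Algebra.algebraMap_eq_smul_one]
  rw [h1, h2, Matrix.smul_mul, one_mul]
  rw [eq_sub_iff_add_eq, ← sub_eq_zero, ← hch]
  abel

lemma quad {K : Type} [Field K] [NumberField K] (h2 : finrank ℚ K = 2) :
    ∃ z : K, Algebra.trace ℚ K z = 0 ∧ z ^ 2 = algebraMap ℚ K ((discr K : ℚ)) := by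
  have hcard : Fintype.card (Free.ChooseBasisIndex ℤ (𝓞 K)) = 2 := by
    rw [← Module.finrank_eq_card_chooseBasisIndex, RingOfIntegers.rank, h2]
  let e : Free.ChooseBasisIndex ℤ (𝓞 K) ≃ Fin 2 := Fintype.equivFinOfCardEq hcard
  let b : Basis (Fin 2) ℚ K := (integralBasis K).reindex e
  set T : K →ₗ[ℚ] ℚ := Algebra.trace ℚ K with hT
  have trace_amul : ∀ (r : ℚ) (w : K), T (algebraMap ℚ K r * w) = r * T w := by
    intro r w
    rw [← Algebra.smul_def, map_smul, smul_eq_mul]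
  have trace_alg : ∀ r : ℚ, T (algebraMap ℚ K r) = 2 * r := by
    intro r
    rw [hT, Algebra.trace_algebraMap, h2, nsmul_eq_mul]
    norm_num
  set x := b 0 with hx
  set y := b 1 with hy
  set A := T x with hA
  set B := T y with hB
  set C := T (x * y) with hC
  set P := Algebra.norm ℚ x with hP
  set Q := Algebra.norm ℚ y with hQ
  -- discriminant as determinant
  have hdisc : (discr K : ℚ) = T (x * x) * T (y * y) - C * C := by
    rw [coe_discr, ← Algebra.discr_reindex (A := ℚ) (integralBasis K) e]
    rw [show (integralBasis K ∘ e.symm) = ⇑b by rw [← Basis.coe_reindex]]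
    rw [Algebra.discr_def, Matrix.det_fin_two]
    simp only [Algebra.traceMatrix_apply, Algebra.traceForm_apply]
    rw [hC, hT, mul_comm y x]
  have k1 := key h2 x
  have k2 := key h2 y
  have k3 := key h2 (x * y)
  rw [show (Algebra.norm ℚ) (x * y) = (Algebra.norm ℚ) x * (Algebra.norm ℚ) y from
    map_mul _ x y] at k3
  -- the element z
  set z := algebraMap ℚ K B * x - algebraMap ℚ K A * y with hz
  have hz_tr : T z = 0 := by
    rw [hz, map_sub, trace_amul, trace_amul, ← hA, ← hB]
    ring
  have kz := key h2 z
  rw [hz_tr, map_zero, zero_mul, zero_sub] at kz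
  set R := Algebra.norm ℚ z with hR
  refine ⟨z, hz_tr, ?_⟩
  rw [kz, ← map_neg]
  congr 1
  -- now prove (discr K : ℚ) = -R via trace identities
  have t1 : T (x * x) = A * A - 2 * P := by
    have := congrArg T k1
    rwa [pow_two, map_sub, trace_amul, trace_alg, ← hT, ← hA, ← hP] at this
  have t2 : T (y * y) = B * B - 2 * Q := by
    have := congrArg T k2
    rwa [pow_two, map_sub, trace_amul, trace_alg, ← hT, ← hB, ← hQ] at this
  have t3 : T ((x * y) * (x * y)) = C * C - 2 * (P * Q) := by
    have := congrArg T k3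
    rwa [pow_two, map_sub, trace_amul, trace_alg, ← hT, ← hC, ← hP, ← hQ] at this
  have e6 : (x * y) * (x * y) = algebraMap ℚ K (A * B) * (x * y)
      - algebraMap ℚ K (A * Q) * x - algebraMap ℚ K (B * P) * y
      + algebraMap ℚ K (P * Q) := by
    simp only [map_mul]
    linear_combination (y ^ 2) * k1 + (algebraMap ℚ K A * x - algebraMap ℚ K P) * k2
  have t4 : T ((x * y) * (x * y)) = A * B * C - (A * Q) * A - (B * P) * B
      + 2 * (P * Q) := by
    have := congrArg T e6
    rwa [map_add, map_sub, map_sub, trace_amul, trace_amul, trace_amul, trace_alg,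
      ← hA, ← hB, ← hC] at this
  have e8 : z * z = algebraMap ℚ K (B * B) * (x * x)
      - algebraMap ℚ K (2 * (A * B)) * (x * y) + algebraMap ℚ K (A * A) * (y * y) := by
    rw [hz]
    simp only [map_mul, map_ofNat]
    ring
  have t5 : -(2 * R) = (B * B) * (A * A - 2 * P) - 2 * (A * B) * C
      + (A * A) * (B * B - 2 * Q) := by
    have h0 := congrArg T e8
    rw [map_add, map_sub, trace_amul, trace_amul, trace_amul, t1, t2, ← hC] at h0
    have h1 := congrArg T kz
    rw [pow_two, map_neg, trace_alg] at h1
    rw [← h1, h0]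
  have hABC : A * B * C = C * C - 4 * (P * Q) + A * A * Q + B * B * P := by
    linear_combination t3 - t4
  have hD : (discr K : ℚ) = (A * A - 2 * P) * (B * B - 2 * Q) - C * C := by
    rw [hdisc, t1, t2]
  linear_combination -hD + (1/2) * t5 - hABC

lemma mink {K : Type} [Field K] [NumberField K] (hr : ∀ v : InfinitePlace K, v.IsReal) :
    ((finrank ℚ K : ℝ) ^ finrank ℚ K / (finrank ℚ K).factorial) ^ 2 ≤ |(discr K : ℝ)| := by
  have h0 : nrComplexPlaces K = 0 :=
    Fintype.card_eq_zero_iff.mpr ⟨fun w =>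
      (InfinitePlace.not_isComplex_iff_isReal.mpr (hr w.1)) w.2⟩
  obtain ⟨x, hx, hbd⟩ := exists_ne_zero_mem_ringOfIntegers_of_norm_le_mul_sqrt_discr K
  have h_nm : (1 : ℝ) ≤ |Algebra.norm ℚ (x : K)| := by
    rw [← Algebra.coe_norm_int, ← Int.cast_one, ← Int.cast_abs, Rat.cast_intCast, Int.cast_le]
    exact Int.one_le_abs (Algebra.norm_ne_zero_iff.mpr hx)
  replace hbd := le_trans h_nm hbd
  rw [h0, pow_zero, one_mul] at hbd
  have hn : (0 : ℝ) < (finrank ℚ K : ℝ) ^ finrank ℚ K := by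
    have := finrank_pos (R := ℚ) (M := K)
    positivity
  have hfac : (0 : ℝ) < ((finrank ℚ K).factorial : ℝ) := by
    exact_mod_cast (finrank ℚ K).factorial_pos
  have h1 : (finrank ℚ K : ℝ) ^ finrank ℚ K / (finrank ℚ K).factorial
      ≤ Real.sqrt |(discr K : ℝ)| := by
    calc (finrank ℚ K : ℝ) ^ finrank ℚ K / (finrank ℚ K).factorial
        = (finrank ℚ K : ℝ) ^ finrank ℚ K / (finrank ℚ K).factorial * 1 := (mul_one _).symm
      _ ≤ (finrank ℚ K : ℝ) ^ finrank ℚ K / (finrank ℚ K).factorial *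
            (((finrank ℚ K).factorial : ℝ) / (finrank ℚ K : ℝ) ^ finrank ℚ K *
              Real.sqrt |(discr K : ℝ)|) := mul_le_mul_of_nonneg_left hbd (by positivity)
      _ = Real.sqrt |(discr K : ℝ)| := by field_simp
  calc ((finrank ℚ K : ℝ) ^ finrank ℚ K / (finrank ℚ K).factorial) ^ 2
      ≤ Real.sqrt |(discr K : ℝ)| ^ 2 := by
        apply pow_le_pow_left₀ (by positivity) h1
    _ = |(discr K : ℝ)| := Real.sq_sqrt (abs_nonneg _)


lemma aux_growth : ∀ n : ℕ, 3 ≤ n → (9 / 2 : ℝ) ≤ (n : ℝ) ^ n / n.factorial := by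
  intro n hn
  induction n, hn using Nat.le_induction with
  | base => norm_num [Nat.factorial]
  | succ m hm ih =>
    have hfac : (0 : ℝ) < (m.factorial : ℝ) := by exact_mod_cast m.factorial_pos
    have h1 : ((m : ℝ)) ^ m / m.factorial ≤ ((m : ℝ) + 1) ^ m / m.factorial := by
      have h0 : ((m : ℝ)) ^ m ≤ ((m : ℝ) + 1) ^ m :=
        pow_le_pow_left₀ (Nat.cast_nonneg m) (by linarith) m
      exact div_le_div_of_nonneg_right h0 hfac.le
    have h2 : (((m + 1 : ℕ)) : ℝ) ^ (m + 1) / ((m + 1).factorial : ℝ)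
        = ((m : ℝ) + 1) ^ m / m.factorial := by
      rw [Nat.factorial_succ]
      push_cast
      rw [pow_succ]
      field_simp
    rw [h2]
    linarith

/-- If `K` is a totally real number field of degree `n ≥ 3`, then `|disc K| > 20`.
Consequently `ℚ(√5)`, of discriminant `5`, has the smallest absolute discriminant
among totally real number fields other than `ℚ`: every totally real number field
`K ≠ ℚ` has `|disc K| ≥ 5`. -/
theorem stmt7 :
    (∀ (K : Type) [Field K] [NumberField K],
      (∀ v : InfinitePlace K, v.IsReal) → 3 ≤ finrank ℚ K → 20 < |discr K|) ∧
    (∀ (K : Type) [Field K] [NumberField K],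
      (∀ v : InfinitePlace K, v.IsReal) → 2 ≤ finrank ℚ K → 5 ≤ |discr K|) := by
  have part1 : ∀ (K : Type) [Field K] [NumberField K],
      (∀ v : InfinitePlace K, v.IsReal) → 3 ≤ finrank ℚ K → 20 < |discr K| := by
    intro K _ _ hr h3
    have hm := mink hr
    have hg := aux_growth (finrank ℚ K) h3
    have h20 : (20 : ℝ) < |(discr K : ℝ)| := by nlinarith
    rw [← Int.cast_abs] at h20
    exact_mod_cast h20
  refine ⟨part1, ?_⟩
  intro K _ _ hr h2
  by_cases h3 : 3 ≤ finrank ℚ K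
  · have := part1 K hr h3
    linarith
  · have h2' : finrank ℚ K = 2 := by omega
    have hm := mink hr
    rw [h2'] at hm
    norm_num [Nat.factorial] at hm
    have h4 : (4 : ℤ) ≤ |discr K| := by
      rw [← Int.cast_abs] at hm
      exact_mod_cast hm
    by_contra h5
    have h45 : |discr K| = 4 := le_antisymm (by linarith) h4
    have hd : discr K = 4 ∨ discr K = -4 := (abs_eq (by norm_num : (0:ℤ) ≤ 4)).mp h45
    obtain ⟨z, hz0, hz2⟩ := quad h2'
    rcases hd with hd | hd
    · -- discr K = 4 : then z = ±2 has trace ≠ 0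
      rw [hd] at hz2
      have h4' : algebraMap ℚ K ((4 : ℤ) : ℚ) = algebraMap ℚ K 2 * algebraMap ℚ K 2 := by
        rw [← map_mul]
        norm_num
      have hfact : (z - algebraMap ℚ K 2) * (z + algebraMap ℚ K 2) = 0 := by
        linear_combination hz2 + h4'
      have htr2 : Algebra.trace ℚ K (algebraMap ℚ K 2) = 4 := by
        rw [Algebra.trace_algebraMap, h2']
        norm_num
      rcases mul_eq_zero.mp hfact with h | h
      · rw [sub_eq_zero] at h
        rw [h, htr2] at hz0
        norm_num at hz0
      · have h' : z = -(algebraMap ℚ K 2) := by linear_combination h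
        rw [h', map_neg, htr2] at hz0
        norm_num at hz0
    · -- discr K = -4 : contradiction with a real embedding
      rw [hd] at hz2
      have v : InfinitePlace K := Classical.arbitrary _
      let ψ := InfinitePlace.embedding_of_isReal (hr v)
      have hψ : ψ (algebraMap ℚ K ((-4 : ℤ) : ℚ)) = (-4 : ℝ) := by
        rw [eq_ratCast (algebraMap ℚ K), map_ratCast]
        norm_num
      have h6 : (ψ z) ^ 2 = (-4 : ℝ) := by
        rw [← map_pow, hz2, hψ]
      nlinarith [sq_nonneg (ψ z)]
end

section
/- Let F = Q(√5), φ = (1+√5)/2. Then the Hamilton quaternion algebra F[i,j,k] (with i² = j² = −1, ij = k) contains the order S = R[½(1 − φ̄i + φj), ½(−φ̄i + j + φk), ½(φi − φ̄j + k), ½(i + φj − φ̄k)] where R = Z[φ] and φ̄ = (1−√5)/2, and S is closed under multiplication (i.e., S is an R-order in F[i,j,k]). -/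
open Quaternion Module

set_option maxHeartbeats 4000000 in
/-- Let `F = ℚ(√5)`, `φ = (1+√5)/2`, `φ̄ = 1 − φ = (1−√5)/2`, and let `R = ℤ[φ] ⊆ F`.
The Hamilton quaternion algebra `ℍ[F] = F[i,j,k]` (with `i² = j² = −1`, `ij = k`)
contains the `R`-module `S` generated by `1` and
`½(1 − φ̄i + φj)`, `½(−φ̄i + j + φk)`, `½(φi − φ̄j + k)`, `½(i + φj − φ̄k)`,
and `S` is an `R`-order: it contains `1`, is closed under multiplication, and spans
`ℍ[F]` over `F`. -/
theorem stmt17 (F : Type*) [Field F] [NumberField F]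
    (h2 : finrank ℚ F = 2) (φ : F) (hφ : φ ^ 2 = φ + 1)
    (R : Subring F) (hR : R = Subring.closure {φ})
    (e1 e2 e3 e4 : ℍ[F, -1, -1])
    (he1 : e1 = (2 : F)⁻¹ • (⟨1, -(1 - φ), φ, 0⟩ : ℍ[F, -1, -1]))
    (he2 : e2 = (2 : F)⁻¹ • (⟨0, -(1 - φ), 1, φ⟩ : ℍ[F, -1, -1]))
    (he3 : e3 = (2 : F)⁻¹ • (⟨0, φ, -(1 - φ), 1⟩ : ℍ[F, -1, -1]))
    (he4 : e4 = (2 : F)⁻¹ • (⟨0, 1, φ, -(1 - φ)⟩ : ℍ[F, -1, -1]))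
    (S : Submodule R ℍ[F, -1, -1])
    (hS : S = Submodule.span R {1, e1, e2, e3, e4}) :
    (1 : ℍ[F, -1, -1]) ∈ S ∧
    (∀ x ∈ S, ∀ y ∈ S, x * y ∈ S) ∧
    Submodule.span F (S : Set ℍ[F, -1, -1]) = ⊤ := by
  subst hS
  have hφR : φ ∈ R := hR ▸ Subring.subset_closure rfl
  have hcoef : ∀ m n : ℤ, ((m : F) + (n : F) * φ) ∈ R := fun m n =>
    Subring.add_mem _ (intCast_mem R m) (Subring.mul_mem _ (intCast_mem R n) hφR)
  have smem : ∀ (c : F), c ∈ R → ∀ x : ℍ[F,-1,-1],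
      x ∈ Submodule.span R {1, e1, e2, e3, e4} →
      c • x ∈ Submodule.span R {1, e1, e2, e3, e4} := by
    intro c hc x hx
    have := Submodule.smul_mem _ (⟨c, hc⟩ : R) hx
    rwa [Subring.smul_def] at this
  have mem1 : (1:ℍ[F,-1,-1]) ∈ Submodule.span R {1, e1, e2, e3, e4} :=
    Submodule.subset_span (by simp)
  have meme1 : e1 ∈ Submodule.span R {1, e1, e2, e3, e4} := Submodule.subset_span (by simp)
  have meme2 : e2 ∈ Submodule.span R {1, e1, e2, e3, e4} := Submodule.subset_span (by simp)
  have meme3 : e3 ∈ Submodule.span R {1, e1, e2, e3, e4} := Submodule.subset_span (by simp)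
  have key : ∀ (m0 n0 m1 n1 m2 n2 m3 n3 : ℤ) (x : ℍ[F,-1,-1]),
      x = ((m0:F)+(m0:F)*0+(n0:F)*φ) • (1:ℍ[F,-1,-1]) + ((m1:F)+(n1:F)*φ) • e1
        + ((m2:F)+(n2:F)*φ) • e2 + ((m3:F)+(n3:F)*φ) • e3 →
      x ∈ Submodule.span R {1, e1, e2, e3, e4} := by
    intro m0 n0 m1 n1 m2 n2 m3 n3 x hx
    rw [hx]
    have c0 : ((m0:F)+(m0:F)*0+(n0:F)*φ) ∈ R := by simpa using hcoef m0 n0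
    exact Submodule.add_mem _ (Submodule.add_mem _ (Submodule.add_mem _
      (smem _ c0 _ mem1) (smem _ (hcoef m1 n1) _ meme1))
      (smem _ (hcoef m2 n2) _ meme2)) (smem _ (hcoef m3 n3) _ meme3)
  have hmul : ∀ p, p ∈ ({1, e1, e2, e3, e4} : Set ℍ[F,-1,-1]) →
      ∀ q, q ∈ ({1, e1, e2, e3, e4} : Set ℍ[F,-1,-1]) →
      p * q ∈ Submodule.span R {1, e1, e2, e3, e4} := by
    intro p hp q hq
    have hp0 := hp
    have hq0 := hq
    simp only [Set.mem_insert_iff, Set.mem_singleton_iff] at hp hq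
    rcases hp with rfl | rfl | rfl | rfl | rfl
    · rw [one_mul]; exact Submodule.subset_span hq0
    · rcases hq with rfl | rfl | rfl | rfl | rfl
      · rw [mul_one]; exact Submodule.subset_span hp0
      · exact key (-1) (0) (1) (0) (0) (0) (0) (0) _ (by (subst he1 he2 he3 he4; ext <;> simp <;> field_simp <;> ring_nf <;> (try simp only [hφ]) <;> ring))
      · exact key (-2) (1) (3) (-2) (-2) (1) (-2) (2) _ (by (subst he1 he2 he3 he4; ext <;> simp <;> field_simp <;> ring_nf <;> (try simp only [hφ]) <;> ring))
      · exact key (1) (-1) (-3) (2) (2) (-2) (3) (-1) _ (by (subst he1 he2 he3 he4; ext <;> simp <;> field_simp <;> ring_nf <;> (try simp only [hφ]) <;> ring))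
      · exact key (-1) (0) (2) (-1) (-2) (1) (-1) (1) _ (by (subst he1 he2 he3 he4; ext <;> simp <;> field_simp <;> ring_nf <;> (try simp only [hφ]) <;> ring))
    · rcases hq with rfl | rfl | rfl | rfl | rfl
      · rw [mul_one]; exact Submodule.subset_span hp0
      · exact key (1) (-1) (-3) (2) (3) (-1) (2) (-2) _ (by (subst he1 he2 he3 he4; ext <;> simp <;> field_simp <;> ring_nf <;> (try simp only [hφ]) <;> ring))
      · exact key (-1) (0) (0) (0) (0) (0) (0) (0) _ (by (subst he1 he2 he3 he4; ext <;> simp <;> field_simp <;> ring_nf <;> (try simp only [hφ]) <;> ring))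
      · exact key (2) (-2) (-4) (3) (3) (-2) (3) (-2) _ (by (subst he1 he2 he3 he4; ext <;> simp <;> field_simp <;> ring_nf <;> (try simp only [hφ]) <;> ring))
      · exact key (-1) (0) (2) (-1) (-1) (1) (-1) (0) _ (by (subst he1 he2 he3 he4; ext <;> simp <;> field_simp <;> ring_nf <;> (try simp only [hφ]) <;> ring))
    · rcases hq with rfl | rfl | rfl | rfl | rfl
      · rw [mul_one]; exact Submodule.subset_span hp0
      · exact key (-2) (1) (3) (-2) (-2) (2) (-2) (1) _ (by (subst he1 he2 he3 he4; ext <;> simp <;> field_simp <;> ring_nf <;> (try simp only [hφ]) <;> ring))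
      · exact key (-2) (1) (4) (-3) (-3) (2) (-3) (2) _ (by (subst he1 he2 he3 he4; ext <;> simp <;> field_simp <;> ring_nf <;> (try simp only [hφ]) <;> ring))
      · exact key (-1) (0) (0) (0) (0) (0) (0) (0) _ (by (subst he1 he2 he3 he4; ext <;> simp <;> field_simp <;> ring_nf <;> (try simp only [hφ]) <;> ring))
      · exact key (1) (-1) (-2) (1) (1) (0) (1) (-1) _ (by (subst he1 he2 he3 he4; ext <;> simp <;> field_simp <;> ring_nf <;> (try simp only [hφ]) <;> ring))
    · rcases hq with rfl | rfl | rfl | rfl | rfl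
      · rw [mul_one]; exact Submodule.subset_span hp0
      · exact key (-1) (0) (2) (-1) (-1) (1) (-2) (1) _ (by (subst he1 he2 he3 he4; ext <;> simp <;> field_simp <;> ring_nf <;> (try simp only [hφ]) <;> ring))
      · exact key (1) (-1) (-2) (1) (1) (-1) (1) (0) _ (by (subst he1 he2 he3 he4; ext <;> simp <;> field_simp <;> ring_nf <;> (try simp only [hφ]) <;> ring))
      · exact key (-1) (0) (2) (-1) (-1) (0) (-1) (1) _ (by (subst he1 he2 he3 he4; ext <;> simp <;> field_simp <;> ring_nf <;> (try simp only [hφ]) <;> ring))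
      · exact key (-1) (0) (0) (0) (0) (0) (0) (0) _ (by (subst he1 he2 he3 he4; ext <;> simp <;> field_simp <;> ring_nf <;> (try simp only [hφ]) <;> ring))
  refine ⟨mem1, ?_, ?_⟩
  · intro x hx y hy
    have key1 : ∀ q, q ∈ ({1, e1, e2, e3, e4} : Set ℍ[F,-1,-1]) →
        x * q ∈ Submodule.span R {1, e1, e2, e3, e4} := by
      intro q hq
      induction hx using Submodule.span_induction with
      | mem p hp => exact hmul p hp q hq
      | zero => simpa using Submodule.zero_mem _
      | add a b _ _ ha hb => rw [add_mul]; exact Submodule.add_mem _ ha hb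
      | smul r a _ ha =>
        rw [Subring.smul_def, smul_mul_assoc]
        exact smem _ r.2 _ ha
    induction hy using Submodule.span_induction with
    | mem q hq => exact key1 q hq
    | zero => simpa using Submodule.zero_mem _
    | add a b _ _ ha hb => rw [mul_add]; exact Submodule.add_mem _ ha hb
    | smul r a _ ha =>
      rw [Subring.smul_def, mul_smul_comm]
      exact smem _ r.2 _ ha
  · have hsub : ∀ z : ℍ[F,-1,-1], z ∈ Submodule.span R {1, e1, e2, e3, e4} →
        z ∈ Submodule.span F ((Submodule.span R {1, e1, e2, e3, e4} :
          Submodule R ℍ[F,-1,-1]) : Set ℍ[F,-1,-1]) :=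
      fun z hz => Submodule.subset_span hz
    have hI : (⟨0,1,0,0⟩ : ℍ[F,-1,-1]) = ((0:F)+(0:F)*φ) • (1:ℍ[F,-1,-1]) + ((0:F)+(0:F)*φ) • e1 + ((-1:F)+(0:F)*φ) • e2 + ((0:F)+(1:F)*φ) • e3 := by
      (subst he1 he2 he3 he4; ext <;> simp <;> field_simp <;> ring_nf <;> (try simp only [hφ]) <;> ring)
    have hJ : (⟨0,0,1,0⟩ : ℍ[F,-1,-1]) = ((1:F)+(-1:F)*φ) • (1:ℍ[F,-1,-1]) + ((-2:F)+(2:F)*φ) • e1 + ((2:F)+(-1:F)*φ) • e2 + ((1:F)+(-1:F)*φ) • e3 := by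
      (subst he1 he2 he3 he4; ext <;> simp <;> field_simp <;> ring_nf <;> (try simp only [hφ]) <;> ring)
    have hK : (⟨0,0,0,1⟩ : ℍ[F,-1,-1]) = ((2:F)+(-1:F)*φ) • (1:ℍ[F,-1,-1]) + ((-4:F)+(2:F)*φ) • e1 + ((3:F)+(-1:F)*φ) • e2 + ((3:F)+(-2:F)*φ) • e3 := by
      (subst he1 he2 he3 he4; ext <;> simp <;> field_simp <;> ring_nf <;> (try simp only [hφ]) <;> ring)
    rw [eq_top_iff]
    rintro x -
    have hx : x = x.re • (1:ℍ[F,-1,-1]) + x.imI • (⟨0,1,0,0⟩ : ℍ[F,-1,-1])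
        + x.imJ • (⟨0,0,1,0⟩ : ℍ[F,-1,-1]) + x.imK • (⟨0,0,0,1⟩ : ℍ[F,-1,-1]) := by
      ext <;> simp
    have m1 := hsub _ mem1
    have me1 := hsub _ meme1
    have me2 := hsub _ meme2
    have me3 := hsub _ meme3
    have mI : (⟨0,1,0,0⟩ : ℍ[F,-1,-1]) ∈ Submodule.span F ((Submodule.span R
        {1, e1, e2, e3, e4} : Submodule R ℍ[F,-1,-1]) : Set ℍ[F,-1,-1]) := by
      rw [hI]
      exact Submodule.add_mem _ (Submodule.add_mem _ (Submodule.add_mem _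
        (Submodule.smul_mem _ _ m1) (Submodule.smul_mem _ _ me1))
        (Submodule.smul_mem _ _ me2)) (Submodule.smul_mem _ _ me3)
    have mJ : (⟨0,0,1,0⟩ : ℍ[F,-1,-1]) ∈ Submodule.span F ((Submodule.span R
        {1, e1, e2, e3, e4} : Submodule R ℍ[F,-1,-1]) : Set ℍ[F,-1,-1]) := by
      rw [hJ]
      exact Submodule.add_mem _ (Submodule.add_mem _ (Submodule.add_mem _
        (Submodule.smul_mem _ _ m1) (Submodule.smul_mem _ _ me1))
        (Submodule.smul_mem _ _ me2)) (Submodule.smul_mem _ _ me3)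
    have mK : (⟨0,0,0,1⟩ : ℍ[F,-1,-1]) ∈ Submodule.span F ((Submodule.span R
        {1, e1, e2, e3, e4} : Submodule R ℍ[F,-1,-1]) : Set ℍ[F,-1,-1]) := by
      rw [hK]
      exact Submodule.add_mem _ (Submodule.add_mem _ (Submodule.add_mem _
        (Submodule.smul_mem _ _ m1) (Submodule.smul_mem _ _ me1))
        (Submodule.smul_mem _ _ me2)) (Submodule.smul_mem _ _ me3)
    rw [hx]
    exact Submodule.add_mem _ (Submodule.add_mem _ (Submodule.add_mem _
      (Submodule.smul_mem _ _ m1) (Submodule.smul_mem _ _ mI))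
      (Submodule.smul_mem _ _ mJ)) (Submodule.smul_mem _ _ mK)
end
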